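/- Let n ≥ 2 be an integer and set x_k = cos(kπ/n) for k = 0, 1, …, n (so x_1, …, x_{n−1} are the zeros of T_n′ and x_0 = 1, x_n = −1). For a differentiable function f define ℓ_k(x) = T_n′(x)/((x − x_k)·T_n′′(x_k)) for 1 ≤ k ≤ n−1, and 𝓛_k(f;x) = (1 − x_k·x)·f(x_k) + (1 − x_k²)·(x − x_k)·f′(x_k). Then for every polynomial f of degree at most 2n−1 and every real x, f(x) = ((T_n′(x))²/(2n⁴))·((1+x)·f(x_0) + (1−x)·f(x_n)) + (1−x²)·Σ_{k=1}^{n−1} (ℓ_k(x)²/(1−x_k²)²)·𝓛_k(f;x). -/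

import Mathlib

open Polynomial Real

/-- The `n`-th Chebyshev polynomial of the first kind, as a real polynomial. -/
noncomputable def chebT (n : ℕ) : Polynomial ℝ := Polynomial.Chebyshev.T ℝ (n : ℤ)

/-- `xk n k = cos(kπ/n)`, the interpolation nodes (`x_1, …, x_{n-1}` are the
zeros of `T_n'`, and `x_0 = 1`, `x_n = -1`). -/
noncomputable def xk (n k : ℕ) : ℝ := Real.cos (k * π / n)

/-- The Lagrange basis polynomial `ℓ_k(x) = T_n'(x)/((x - x_k) T_n''(x_k))` for
interpolation at the zeros of `T_n'`; since `x_k` is a root of `T_n'`, the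
polynomial division `T_n' / (X - x_k)` is exact. -/
noncomputable def ell (n k : ℕ) (x : ℝ) : ℝ :=
  (derivative (chebT n) / (X - C (xk n k))).eval x
    / (derivative (derivative (chebT n))).eval (xk n k)

/-- `𝓛_k(f;x) = (1 - x_k x) f(x_k) + (1 - x_k²)(x - x_k) f'(x_k)` for a polynomial `f`. -/
noncomputable def Lk (n k : ℕ) (f : Polynomial ℝ) (x : ℝ) : ℝ :=
  (1 - xk n k * x) * f.eval (xk n k)
    + (1 - xk n k ^ 2) * (x - xk n k) * (derivative f).eval (xk n k)

/-!
The right-hand side is the value at `x` of a polynomial `hermitePoly n f` of degree at most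
`2n - 1`. The `ℓ_k` form the Lagrange basis for the zeros `x_k` of `T_n'`. The Chebyshev equation
`(1 - x²) T'' = x T' - n² T` and its derivative give `(1 - x_k²) T''(x_k) ≠ 0` and
`ℓ_k'(x_k) = 3 x_k / (2 (1 - x_k²))`, which is exactly what makes the interpolant agree with `f`
and `f'` at every `x_k`; at `±1` it agrees with `f` because `T_n'(±1)² = n⁴`. So
`hermitePoly n f - f` has `2n` roots counted with multiplicity but degree below `2n`: it is zero.
-/

namespace Polynomial

theorem sum_rootMultiplicity_le_natDegree {R : Type*} [CommRing R] [IsDomain R]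
    (p : R[X]) (s : Finset R) : ∑ a ∈ s, p.rootMultiplicity a ≤ p.natDegree := by
  classical
  calc ∑ a ∈ s, p.rootMultiplicity a
      ≤ ∑ a ∈ s ∪ p.roots.toFinset, p.roots.count a := by
        simp only [count_roots]
        exact Finset.sum_le_sum_of_subset Finset.subset_union_left
    _ = Multiset.card p.roots := Multiset.sum_count_eq_card fun a ha =>
        Finset.mem_union_right _ (Multiset.mem_toFinset.2 ha)
    _ ≤ p.natDegree := card_roots' p

theorem eq_zero_of_natDegree_lt_card_add_two_mul_card {R : Type*} [CommRing R] [IsDomain R]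
    {p : R[X]} {S T : Finset R} (hST : Disjoint S T) (hS : ∀ a ∈ S, p.IsRoot a)
    (hT : ∀ a ∈ T, p.IsRoot a ∧ (derivative p).IsRoot a)
    (hdeg : p.natDegree < S.card + 2 * T.card) : p = 0 := by
  classical
  by_contra hp
  have hS' : S.card ≤ ∑ a ∈ S, p.rootMultiplicity a := by
    rw [Finset.card_eq_sum_ones]
    exact Finset.sum_le_sum fun a ha => (rootMultiplicity_pos hp).2 (hS a ha)
  have hT' : 2 * T.card ≤ ∑ a ∈ T, p.rootMultiplicity a := by
    rw [Finset.card_eq_sum_ones, Finset.mul_sum]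
    exact Finset.sum_le_sum fun a ha => (one_lt_rootMultiplicity_iff_isRoot hp).2 (hT a ha)
  have := sum_rootMultiplicity_le_natDegree p (S ∪ T)
  rw [Finset.sum_union hST] at this
  omega

section DivXSubC

variable {K : Type*} [Field K] {p : K[X]} {a : K}

theorem X_sub_C_mul_div_X_sub_C (h : p.IsRoot a) : (X - C a) * (p / (X - C a)) = p :=
  EuclideanDomain.mul_div_cancel' (X_sub_C_ne_zero a) (dvd_iff_isRoot.2 h)

theorem eval_div_X_sub_C_self (h : p.IsRoot a) :
    (p / (X - C a)).eval a = (derivative p).eval a := by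
  conv_rhs => rw [← X_sub_C_mul_div_X_sub_C h]
  simp [derivative_mul]

theorem two_mul_eval_derivative_div_X_sub_C_self (h : p.IsRoot a) :
    2 * (derivative (p / (X - C a))).eval a = (derivative (derivative p)).eval a := by
  conv_rhs => rw [← X_sub_C_mul_div_X_sub_C h]
  simp only [derivative_mul, derivative_add, derivative_sub, derivative_X, derivative_C,
    derivative_one, derivative_zero, eval_add, eval_mul, eval_sub, eval_X, eval_C, eval_one,
    eval_zero]
  ring

theorem eval_div_X_sub_C_of_isRoot {b : K} (h : p.IsRoot a) (hb : p.IsRoot b) (hba : b ≠ a) :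
    (p / (X - C a)).eval b = 0 := by
  have := hb.eq_zero
  rw [← X_sub_C_mul_div_X_sub_C h, eval_mul] at this
  simpa [sub_ne_zero.2 hba] using this

theorem natDegree_div_X_sub_C_le (h : p.IsRoot a) :
    (p / (X - C a)).natDegree ≤ p.natDegree - 1 := by
  by_cases hq : p / (X - C a) = 0
  · simp [hq]
  conv_rhs => rw [← X_sub_C_mul_div_X_sub_C h]
  rw [natDegree_mul (X_sub_C_ne_zero a) hq, natDegree_X_sub_C]
  omega

end DivXSubC

end Polynomial

open Finset

section Nodes

variable {n k : ℕ}

theorem xk_zero (n : ℕ) : xk n 0 = 1 := by simp [xk]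

theorem xk_self (hn : n ≠ 0) : xk n n = -1 := by
  rw [xk, mul_div_cancel_left₀ π (Nat.cast_ne_zero.2 hn), cos_pi]

theorem xk_injOn (hn : n ≠ 0) : Set.InjOn (xk n) (Set.Iic n) := by
  have mem : ∀ m ∈ Set.Iic n, (m : ℝ) * π / n ∈ Set.Icc 0 π := fun m hm => by
    refine ⟨by positivity, ?_⟩
    rw [div_le_iff₀ (by positivity), mul_comm]
    gcongr
    exact_mod_cast hm
  intro i hi j hj h
  have := injOn_cos (mem i hi) (mem j hj) h
  field_simp at this
  exact_mod_cast this

theorem isRoot_derivative_chebT_xk (hk0 : 0 < k) (hkn : k < n) :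
    (derivative (chebT n)).IsRoot (xk n k) :=
  (Chebyshev.isLocalExtr_T_real (by omega) hk0 hkn).hasDerivAt_eq_zero ((chebT n).hasDerivAt _)

theorem one_sub_xk_sq_mul_eval_derivative_derivative_chebT_ne_zero (hk0 : 0 < k) (hkn : k < n) :
    (1 - xk n k ^ 2) * (derivative (derivative (chebT n))).eval (xk n k) ≠ 0 := by
  have h := Chebyshev.one_sub_X_sq_mul_iterate_derivative_T_eval (R := ℝ) n 0 (xk n k)
  simp only [Function.iterate_succ_apply', Function.iterate_zero_apply] at h
  rw [← chebT] at h
  rw [h, (isRoot_derivative_chebT_xk hk0 hkn).eq_zero, chebT, xk,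
    Chebyshev.eval_T_real_cos_int_mul_pi_div (by omega)]
  have : (n : ℝ) ≠ 0 := by exact_mod_cast (show n ≠ 0 by omega)
  simp [this]

theorem one_sub_xk_sq_ne_zero (hk0 : 0 < k) (hkn : k < n) : 1 - xk n k ^ 2 ≠ 0 :=
  left_ne_zero_of_mul (one_sub_xk_sq_mul_eval_derivative_derivative_chebT_ne_zero hk0 hkn)

theorem eval_derivative_derivative_chebT_xk_ne_zero (hk0 : 0 < k) (hkn : k < n) :
    (derivative (derivative (chebT n))).eval (xk n k) ≠ 0 :=
  right_ne_zero_of_mul (one_sub_xk_sq_mul_eval_derivative_derivative_chebT_ne_zero hk0 hkn)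

theorem one_sub_xk_sq_mul_eval_derivative_derivative_derivative_chebT (hk0 : 0 < k) (hkn : k < n) :
    (1 - xk n k ^ 2) * (derivative (derivative (derivative (chebT n)))).eval (xk n k) =
      3 * xk n k * (derivative (derivative (chebT n))).eval (xk n k) := by
  have h := Chebyshev.one_sub_X_sq_mul_iterate_derivative_T_eval (R := ℝ) n 1 (xk n k)
  simp only [Function.iterate_succ_apply', Function.iterate_zero_apply] at h
  rw [← chebT] at h
  rw [h, (isRoot_derivative_chebT_xk hk0 hkn).eq_zero]
  ring

theorem eval_derivative_chebT_one_sq (n : ℕ) :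
    (derivative (chebT n)).eval 1 ^ 2 = (n : ℝ) ^ 4 := by
  rw [chebT, Chebyshev.derivative_T_eval_one]
  push_cast
  ring

theorem eval_derivative_chebT_neg_one_sq (n : ℕ) :
    (derivative (chebT n)).eval (-1) ^ 2 = (n : ℝ) ^ 4 := by
  rw [chebT, Chebyshev.T_derivative_eq_U]
  simp [Chebyshev.U_eval_neg_one, mul_pow, ← pow_mul, ← pow_add]

theorem natDegree_derivative_chebT_le (n : ℕ) : (derivative (chebT n)).natDegree ≤ n - 1 :=
  (natDegree_derivative_le _).trans (by rw [chebT, Chebyshev.natDegree_T]; simp)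

end Nodes

noncomputable def ellPoly (n k : ℕ) : ℝ[X] :=
  C ((derivative (derivative (chebT n))).eval (xk n k))⁻¹
    * (derivative (chebT n) / (X - C (xk n k)))

noncomputable def lkPoly (n k : ℕ) (f : ℝ[X]) : ℝ[X] :=
  C (f.eval (xk n k)) * (1 - C (xk n k) * X)
    + C ((1 - xk n k ^ 2) * (derivative f).eval (xk n k)) * (X - C (xk n k))

noncomputable def hermiteTerm (n k : ℕ) (f : ℝ[X]) : ℝ[X] :=
  ellPoly n k ^ 2 * C ((1 - xk n k ^ 2) ^ 2)⁻¹ * lkPoly n k f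

noncomputable def hermitePoly (n : ℕ) (f : ℝ[X]) : ℝ[X] :=
  C (2 * (n : ℝ) ^ 4)⁻¹ * derivative (chebT n) ^ 2
      * (C (f.eval 1) * (1 + X) + C (f.eval (-1)) * (1 - X))
    + (1 - X ^ 2) * ∑ k ∈ Icc 1 (n - 1), hermiteTerm n k f

section Interpolant

variable {n j k : ℕ} (f : ℝ[X])

theorem eval_ellPoly (x : ℝ) : (ellPoly n k).eval x = ell n k x := by
  simp [ellPoly, ell, div_eq_inv_mul]

theorem eval_lkPoly (x : ℝ) : (lkPoly n k f).eval x = Lk n k f x := by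
  simp only [lkPoly, Lk, eval_add, eval_sub, eval_mul, eval_C, eval_X, eval_one]
  ring

theorem eval_ellPoly_xk_self (hk0 : 0 < k) (hkn : k < n) : (ellPoly n k).eval (xk n k) = 1 := by
  rw [ellPoly, eval_mul, eval_C, eval_div_X_sub_C_self (isRoot_derivative_chebT_xk hk0 hkn),
    inv_mul_cancel₀ (eval_derivative_derivative_chebT_xk_ne_zero hk0 hkn)]

theorem eval_ellPoly_xk_of_ne (hj0 : 0 < j) (hjn : j < n) (hk0 : 0 < k) (hkn : k < n)
    (hjk : j ≠ k) : (ellPoly n k).eval (xk n j) = 0 := by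
  have hne : xk n j ≠ xk n k := fun h =>
    hjk (xk_injOn (by omega) (Set.mem_Iic.2 hjn.le) (Set.mem_Iic.2 hkn.le) h)
  rw [ellPoly, eval_mul, eval_div_X_sub_C_of_isRoot (isRoot_derivative_chebT_xk hk0 hkn)
    (isRoot_derivative_chebT_xk hj0 hjn) hne, mul_zero]

theorem two_mul_one_sub_xk_sq_mul_eval_derivative_ellPoly_xk_self (hk0 : 0 < k) (hkn : k < n) :
    2 * (1 - xk n k ^ 2) * (derivative (ellPoly n k)).eval (xk n k) = 3 * xk n k := by
  have h2 := two_mul_eval_derivative_div_X_sub_C_self (isRoot_derivative_chebT_xk hk0 hkn)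
  have h3 := one_sub_xk_sq_mul_eval_derivative_derivative_derivative_chebT hk0 hkn
  have hd := eval_derivative_derivative_chebT_xk_ne_zero hk0 hkn
  rw [ellPoly, derivative_C_mul, eval_mul, eval_C]
  field_simp
  linear_combination (1 - xk n k ^ 2) * h2 + h3

theorem natDegree_ellPoly_le (hk0 : 0 < k) (hkn : k < n) : (ellPoly n k).natDegree ≤ n - 2 :=
  (natDegree_C_mul_le _ _).trans <|
    (natDegree_div_X_sub_C_le (isRoot_derivative_chebT_xk hk0 hkn)).trans <| by
      have := natDegree_derivative_chebT_le n
      omega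

theorem natDegree_lkPoly_le : (lkPoly n k f).natDegree ≤ 1 := by
  unfold lkPoly
  compute_degree

theorem eval_hermiteTerm_xk_of_ne (hj0 : 0 < j) (hjn : j < n) (hk0 : 0 < k) (hkn : k < n)
    (hjk : j ≠ k) : (hermiteTerm n k f).eval (xk n j) = 0 := by
  simp [hermiteTerm, eval_ellPoly_xk_of_ne hj0 hjn hk0 hkn hjk]

theorem eval_derivative_hermiteTerm_xk_of_ne (hj0 : 0 < j) (hjn : j < n) (hk0 : 0 < k)
    (hkn : k < n) (hjk : j ≠ k) : (derivative (hermiteTerm n k f)).eval (xk n j) = 0 := by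
  simp [hermiteTerm, derivative_mul, derivative_pow, eval_ellPoly_xk_of_ne hj0 hjn hk0 hkn hjk]

theorem one_sub_xk_sq_mul_eval_hermiteTerm_xk_self (hk0 : 0 < k) (hkn : k < n) :
    (1 - xk n k ^ 2) * (hermiteTerm n k f).eval (xk n k) = f.eval (xk n k) := by
  have hs := one_sub_xk_sq_ne_zero hk0 hkn
  simp only [hermiteTerm, lkPoly, eval_ellPoly_xk_self hk0 hkn, sub_self, mul_zero, add_zero,
    eval_add, eval_sub, eval_mul, eval_pow, eval_C, eval_X, eval_one]
  field_simp

theorem one_sub_xk_sq_sq_mul_eval_derivative_hermiteTerm_xk_self (hk0 : 0 < k) (hkn : k < n) :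
    (1 - xk n k ^ 2) ^ 2 * (derivative (hermiteTerm n k f)).eval (xk n k) =
      2 * xk n k * f.eval (xk n k) + (1 - xk n k ^ 2) * (derivative f).eval (xk n k) := by
  have hs := one_sub_xk_sq_ne_zero hk0 hkn
  have h' := two_mul_one_sub_xk_sq_mul_eval_derivative_ellPoly_xk_self hk0 hkn
  simp only [hermiteTerm, lkPoly, eval_ellPoly_xk_self hk0 hkn, derivative_add, derivative_sub,
    derivative_mul, derivative_pow, derivative_C, derivative_X, derivative_one, eval_add, eval_sub,
    eval_mul, eval_pow, eval_C, eval_X, eval_one, eval_zero]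
  field_simp
  linear_combination f.eval (xk n k) * h'

theorem eval_sum_hermiteTerm_xk (hk0 : 0 < k) (hkn : k < n) :
    (∑ j ∈ Icc 1 (n - 1), hermiteTerm n j f).eval (xk n k) =
      (hermiteTerm n k f).eval (xk n k) := by
  rw [eval_finsetSum]
  refine sum_eq_single_of_mem k (mem_Icc.2 ⟨hk0, by omega⟩) fun j hj hjk => ?_
  obtain ⟨hj0, hjn⟩ := mem_Icc.1 hj
  exact eval_hermiteTerm_xk_of_ne f hk0 hkn hj0 (by omega) hjk.symm

theorem eval_derivative_sum_hermiteTerm_xk (hk0 : 0 < k) (hkn : k < n) :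
    (∑ j ∈ Icc 1 (n - 1), derivative (hermiteTerm n j f)).eval (xk n k) =
      (derivative (hermiteTerm n k f)).eval (xk n k) := by
  rw [eval_finsetSum]
  refine sum_eq_single_of_mem k (mem_Icc.2 ⟨hk0, by omega⟩) fun j hj hjk => ?_
  obtain ⟨hj0, hjn⟩ := mem_Icc.1 hj
  exact eval_derivative_hermiteTerm_xk_of_ne f hk0 hkn hj0 (by omega) hjk.symm

theorem eval_hermitePoly_one (hn : n ≠ 0) : (hermitePoly n f).eval 1 = f.eval 1 := by
  have : (n : ℝ) ≠ 0 := by exact_mod_cast hn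
  simp only [hermitePoly, eval_derivative_chebT_one_sq, eval_add, eval_sub, eval_mul, eval_pow,
    eval_C, eval_X, eval_one]
  field_simp
  ring

theorem eval_hermitePoly_neg_one (hn : n ≠ 0) : (hermitePoly n f).eval (-1) = f.eval (-1) := by
  have : (n : ℝ) ≠ 0 := by exact_mod_cast hn
  simp only [hermitePoly, eval_derivative_chebT_neg_one_sq, eval_add, eval_sub, eval_mul, eval_pow,
    eval_C, eval_X, eval_one]
  field_simp
  ring

theorem eval_hermitePoly_xk (hk0 : 0 < k) (hkn : k < n) :
    (hermitePoly n f).eval (xk n k) = f.eval (xk n k) := by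
  have h := one_sub_xk_sq_mul_eval_hermiteTerm_xk_self f hk0 hkn
  simp only [hermitePoly, eval_sum_hermiteTerm_xk f hk0 hkn,
    (isRoot_derivative_chebT_xk hk0 hkn).eq_zero, eval_add, eval_sub, eval_mul, eval_pow, eval_C,
    eval_X, eval_one]
  linear_combination h

theorem eval_derivative_hermitePoly_xk (hk0 : 0 < k) (hkn : k < n) :
    (derivative (hermitePoly n f)).eval (xk n k) = (derivative f).eval (xk n k) := by
  have hs := one_sub_xk_sq_ne_zero hk0 hkn
  have h0 := one_sub_xk_sq_mul_eval_hermiteTerm_xk_self f hk0 hkn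
  have h1 := one_sub_xk_sq_sq_mul_eval_derivative_hermiteTerm_xk_self f hk0 hkn
  simp only [hermitePoly, derivative_sum, eval_sum_hermiteTerm_xk f hk0 hkn,
    eval_derivative_sum_hermiteTerm_xk f hk0 hkn, (isRoot_derivative_chebT_xk hk0 hkn).eq_zero,
    derivative_add, derivative_sub, derivative_mul, derivative_pow, derivative_C, derivative_X,
    derivative_one, eval_add, eval_sub, eval_mul, eval_pow, eval_C, eval_X, eval_one, eval_zero]
  apply mul_left_cancel₀ (pow_ne_zero 2 hs)
  linear_combination (-2 * xk n k * (1 - xk n k ^ 2)) * h0 + (1 - xk n k ^ 2) * h1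

theorem natDegree_hermitePoly_le (hn : 2 ≤ n) : (hermitePoly n f).natDegree ≤ 2 * n - 1 := by
  have hD := natDegree_derivative_chebT_le n
  have hlin : (C (f.eval 1) * (1 + X) + C (f.eval (-1)) * (1 - X)).natDegree ≤ 1 := by
    compute_degree
  have hquad : ((1 : ℝ[X]) - X ^ 2).natDegree ≤ 2 := by compute_degree
  have hterm : ∀ k ∈ Icc 1 (n - 1), (hermiteTerm n k f).natDegree ≤ 2 * (n - 2) + 1 := by
    intro k hk
    obtain ⟨hk0, hkn⟩ := mem_Icc.1 hk
    exact natDegree_mul_le_of_le ((natDegree_mul_C_le _ _).trans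
      (natDegree_pow_le_of_le 2 (natDegree_ellPoly_le hk0 (by omega)))) (natDegree_lkPoly_le f)
  apply natDegree_add_le_of_degree_le
  · exact (natDegree_mul_le_of_le ((natDegree_C_mul_le _ _).trans
      (natDegree_pow_le_of_le 2 hD)) hlin).trans (by omega)
  · exact (natDegree_mul_le_of_le hquad (natDegree_sum_le_of_forall_le _ _ hterm)).trans
      (by omega)

end Interpolant

theorem hermitePoly_eq_self {n : ℕ} (hn : 2 ≤ n) {f : ℝ[X]} (hf : f.natDegree ≤ 2 * n - 1) :
    hermitePoly n f = f := by
  have hn0 : n ≠ 0 := by omega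
  rw [← sub_eq_zero]
  refine eq_zero_of_natDegree_lt_card_add_two_mul_card (S := {1, -1})
    (T := (Icc 1 (n - 1)).image (xk n)) ?_ ?_ ?_ ?_
  · refine disjoint_left.2 fun a ha hT => ?_
    obtain ⟨k, hk, rfl⟩ := mem_image.1 hT
    obtain ⟨hk0, hkn⟩ := mem_Icc.1 hk
    have := one_sub_xk_sq_ne_zero hk0 (by omega : k < n)
    rcases mem_insert.1 ha with h | h <;> simp_all
  · intro a ha
    rcases mem_insert.1 ha with rfl | h
    · simp [eval_hermitePoly_one f hn0]
    · simp [mem_singleton.1 h, eval_hermitePoly_neg_one f hn0]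
  · intro a ha
    obtain ⟨k, hk, rfl⟩ := mem_image.1 ha
    obtain ⟨hk0, hkn⟩ := mem_Icc.1 hk
    simp [eval_hermitePoly_xk f hk0 (by omega : k < n),
      eval_derivative_hermitePoly_xk f hk0 (by omega : k < n)]
  · have hcard : ((Icc 1 (n - 1)).image (xk n)).card = n - 1 := by
      rw [card_image_of_injOn ((xk_injOn hn0).mono fun k hk => by simp at hk ⊢; omega)]
      simp
    rw [card_pair (by norm_num), hcard]
    have := natDegree_sub_le (hermitePoly n f) f
    have := natDegree_hermitePoly_le f hn
    omega

theorem hermite_interpolation (n : ℕ) (hn : 2 ≤ n) (f : Polynomial ℝ)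
    (hf : f.natDegree ≤ 2 * n - 1) (x : ℝ) :
    f.eval x =
      ((derivative (chebT n)).eval x) ^ 2 / (2 * (n : ℝ) ^ 4)
          * ((1 + x) * f.eval (xk n 0) + (1 - x) * f.eval (xk n n))
        + (1 - x ^ 2) * ∑ k ∈ Finset.Icc 1 (n - 1),
            (ell n k x) ^ 2 / (1 - xk n k ^ 2) ^ 2 * Lk n k f x := by
  calc f.eval x = (hermitePoly n f).eval x := by rw [hermitePoly_eq_self hn hf]
    _ = _ := by
      simp only [hermitePoly, hermiteTerm, eval_finsetSum, eval_ellPoly, eval_lkPoly, xk_zero,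
        xk_self (by omega : n ≠ 0), div_eq_mul_inv, eval_add, eval_sub, eval_mul, eval_pow,
        eval_C, eval_X, eval_one]
      ring
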